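/- For vectors x₁, x₂ ∈ ℝ³ with magnitudes x₁, x₂ > 0, η > 0, and 2|x₁·x₂| < x₁² + x₂² (which always holds when x₁ ≠ x₂), one has exp(-η|x₁−x₂|)/|x₁−x₂| = Σ_{n=0}^∞ (1/√π) · ((-1)ⁿ (−x₁·x₂)ⁿ / n!) · √2 · (x₁² + x₂²)^{(−n−1/2)/2} · η^{n+1/2} · K_{n+1/2}(η√(x₁² + x₂²)). -/

import Mathlib

/-!
Put `r = ‖v₁ - v₂‖`, `C = ‖v₁‖² + ‖v₂‖²` and `A = ⟪v₁, v₂⟫`, so that `r² = C - 2A`.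
The substitution `t = √(b/a) eᵘ` turns `a t + b/t` into `2√(ab) cosh u`, which gives
`∫₀^∞ t^(ν-1) e^(-(a t + b/t)) dt = 2 (b/a)^(ν/2) K_ν(2√(ab))`.
Since `K_{1/2}(x) = √(π/(2x)) e^(-x)`, the case `ν = 1/2` writes `e^(-ηr)/r` as
`π^(-1/2) ∫₀^∞ t^(-1/2) e^(-(r² t + η²/(4t))) dt`. Expanding the factor `e^(2At)` of the
integrand in its power series and integrating term by term turns every term into an integral of
the same kind with `a = C` and `ν = n + 1/2`. Termwise integration is justified because
`Γ(n + 1/2) ≤ √π n!` bounds the `n`-th term by a multiple of `(2|A|/C)ⁿ`.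
-/

open MeasureTheory Real

/-- The modified Bessel function of the second kind (Macdonald function),
via its standard integral representation (valid for `x > 0`). -/
noncomputable def besselK (ν x : ℝ) : ℝ :=
  ∫ t in Set.Ioi (0:ℝ), Real.exp (-x * Real.cosh t) * Real.cosh (ν * t)

open Set Filter
open scoped Nat

lemma sq_div_four_le_cosh (u : ℝ) : u ^ 2 / 4 ≤ cosh u := by
  have h := pow_div_factorial_le_exp |u| (abs_nonneg u) 2
  rw [sq_abs, Nat.factorial_two, Nat.cast_two] at h
  rw [← cosh_abs, cosh_eq]
  linarith [exp_pos (-|u|)]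

lemma integrable_exp_neg_mul_sq_add_mul {b : ℝ} (hb : 0 < b) (c : ℝ) :
    Integrable fun u : ℝ ↦ exp (-b * u ^ 2 + c * u) := by
  refine (integrable_cexp_quadratic (b := (b : ℂ)) (by simpa using hb) c 0).norm.congr
    (Eventually.of_forall fun u ↦ ?_)
  simp only [Complex.norm_exp, add_zero]
  norm_cast

lemma integrable_exp_mul_sub_mul_cosh (ν : ℝ) {x : ℝ} (hx : 0 < x) :
    Integrable fun u : ℝ ↦ exp (ν * u - x * cosh u) := by
  refine (integrable_exp_neg_mul_sq_add_mul (b := x / 4) (by positivity) ν).mono'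
    (by fun_prop) (Eventually.of_forall fun u ↦ ?_)
  rw [norm_of_nonneg (exp_pos _).le, exp_le_exp]
  nlinarith [mul_le_mul_of_nonneg_left (sq_div_four_le_cosh u) hx.le]

lemma integral_exp_mul_sub_mul_cosh (ν : ℝ) {x : ℝ} (hx : 0 < x) :
    ∫ u, exp (ν * u - x * cosh u) = 2 * besselK ν x := by
  have hflip : ∫ u, exp (-ν * u - x * cosh u) = ∫ u, exp (ν * u - x * cosh u) := by
    simpa using integral_neg_eq_self (fun u ↦ exp (ν * u - x * cosh u)) volume
  have hsum : (∫ u, exp (ν * u - x * cosh u)) + ∫ u, exp (-ν * u - x * cosh u) =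
      ∫ u, 2 * (exp (-x * cosh |u|) * cosh (ν * |u|)) := by
    rw [← integral_add (integrable_exp_mul_sub_mul_cosh ν hx)
      (integrable_exp_mul_sub_mul_cosh (-ν) hx)]
    congr 1 with u
    have hcosh : cosh (ν * |u|) = cosh (ν * u) := by
      rw [← cosh_abs, abs_mul, abs_abs, ← abs_mul, cosh_abs]
    rw [cosh_abs, hcosh, cosh_eq (ν * u)]
    simp only [sub_eq_add_neg, exp_add, neg_mul, exp_neg]
    ring
  rw [integral_comp_abs (f := fun s ↦ 2 * (exp (-x * cosh s) * cosh (ν * s))),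
    integral_const_mul, hflip] at hsum
  unfold besselK
  linarith

lemma integral_Ioi_zero_eq_integral_exp_smul {E : Type*} [NormedAddCommGroup E]
    [NormedSpace ℝ E] (g : ℝ → E) : ∫ t in Ioi 0, g t = ∫ u, exp u • g (exp u) := by
  rw [← range_exp, ← image_univ, integral_image_eq_integral_abs_deriv_smul MeasurableSet.univ
    (fun u _ ↦ (hasDerivAt_exp u).hasDerivWithinAt) exp_injective.injOn, Measure.restrict_univ]
  simp_rw [abs_of_pos (exp_pos _)]

theorem integral_rpow_mul_exp_neg_mul_add_div {ν a b : ℝ} (ha : 0 < a) (hb : 0 < b) :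
    ∫ t in Ioi 0, t ^ (ν - 1) * exp (-(a * t + b / t)) =
      2 * (b / a) ^ (ν / 2) * besselK ν (2 * √(a * b)) := by
  -- `t = c eᵘ` turns `a t + b / t` into `2 √(ab) cosh u`
  set c := √(b / a) with hc
  have hc0 : 0 < c := by positivity
  have hac : a * c = √(a * b) := by
    rw [← sqrt_sq (by positivity : 0 ≤ a * c), mul_pow, hc, sq_sqrt (by positivity)]
    field_simp
  have hbc : b / c = √(a * b) := by
    rw [← sqrt_sq (by positivity : 0 ≤ b / c), div_pow, hc, sq_sqrt (by positivity)]
    field_simp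
  have hsubst : ∀ u, exp (u + log c) • ((exp (u + log c)) ^ (ν - 1) *
      exp (-(a * exp (u + log c) + b / exp (u + log c)))) =
      c ^ ν * exp (ν * u - 2 * √(a * b) * cosh u) := by
    intro u
    have hcu : 0 < c * exp u := by positivity
    rw [exp_add, exp_log hc0, smul_eq_mul, ← mul_assoc, mul_comm (exp u) c, mul_comm (c * exp u),
      ← rpow_add_one hcu.ne', sub_add_cancel, mul_rpow hc0.le (exp_pos u).le, ← exp_mul,
      ← mul_assoc, hac, div_mul_eq_div_div, hbc, mul_assoc, ← exp_add, cosh_eq, exp_neg u]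
    congr 2
    ring
  rw [integral_Ioi_zero_eq_integral_exp_smul, ← integral_add_right_eq_self _ (log c)]
  simp_rw [hsubst]
  rw [integral_const_mul, integral_exp_mul_sub_mul_cosh ν (by positivity), hc,
    sqrt_eq_rpow, ← rpow_mul (by positivity)]
  ring_nf

lemma besselK_one_half (x : ℝ) : besselK (1 / 2) x = √(π / (2 * x)) * exp (-x) := by
  -- `s = sinh (t/2)` and `cosh t = 1 + 2 sinh² (t/2)` turn the integral into a Gaussian one
  have himage : (fun t ↦ sinh (1 / 2 * t)) '' Ioi 0 = Ioi 0 := by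
    change sinhOrderIso ∘ (1 / 2 * ·) '' Ioi 0 = Ioi 0
    rw [image_comp, image_const_mul_Ioi_zero one_half_pos, OrderIso.image_Ioi]
    simp
  have hderiv : ∀ t ∈ Ioi (0 : ℝ), HasDerivWithinAt (fun t ↦ sinh (1 / 2 * t))
      (cosh (1 / 2 * t) * (1 / 2)) (Ioi 0) t := fun t _ ↦ by
    simpa using (((hasDerivAt_id t).const_mul (1 / 2 : ℝ)).sinh).hasDerivWithinAt
  have hinj : InjOn (fun t ↦ sinh (1 / 2 * t)) (Ioi 0) := fun u _ v _ h ↦ by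
    simpa using sinh_injective h
  have hsubst := integral_image_eq_integral_abs_deriv_smul measurableSet_Ioi hderiv hinj
    fun s ↦ 2 * exp (-x) * exp (-(2 * x) * s ^ 2)
  rw [himage, integral_const_mul, integral_gaussian_Ioi] at hsubst
  have hcosh : ∀ t, cosh t = 1 + 2 * sinh (1 / 2 * t) ^ 2 := fun t ↦ by
    have h := cosh_two_mul (1 / 2 * t)
    rw [cosh_sq, show 2 * (1 / 2 * t) = t by ring] at h
    linarith
  have hintegrand : ∀ t ∈ Ioi (0 : ℝ), |cosh (1 / 2 * t) * (1 / 2)| •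
      (2 * exp (-x) * exp (-(2 * x) * sinh (1 / 2 * t) ^ 2)) =
      exp (-x * cosh t) * cosh (1 / 2 * t) := fun t _ ↦ by
    rw [abs_of_pos (by positivity), smul_eq_mul, hcosh t, mul_assoc 2, ← exp_add]
    ring_nf
  rw [setIntegral_congr_fun measurableSet_Ioi hintegrand] at hsubst
  unfold besselK
  linarith

theorem integral_rpow_neg_half_mul_exp_neg_mul_add_div {a b : ℝ} (ha : 0 < a) (hb : 0 < b) :
    ∫ t in Ioi 0, t ^ ((1 : ℝ) / 2 - 1) * exp (-(a * t + b / t)) =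
      √(π / a) * exp (-(2 * √(a * b))) := by
  rw [integral_rpow_mul_exp_neg_mul_add_div ha hb, besselK_one_half, ← mul_assoc, ← mul_assoc]
  congr 1
  obtain ⟨p, hp, rfl⟩ : ∃ p, 0 < p ∧ p ^ 2 = a := ⟨√a, by positivity, sq_sqrt ha.le⟩
  obtain ⟨q, hq, rfl⟩ : ∃ q, 0 < q ∧ q ^ 2 = b := ⟨√b, by positivity, sq_sqrt hb.le⟩
  rw [← mul_pow, sqrt_sq (by positivity), ← div_pow, ← rpow_natCast, ← rpow_mul (by positivity),
    show ((2 : ℕ) : ℝ) * (1 / 2 / 2) = 1 / 2 by norm_num, ← sqrt_eq_rpow, mul_assoc 2,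
    ← sqrt_mul (by positivity), show 2 = √(2 ^ 2) by simp, ← sqrt_mul (by positivity)]
  congr 1
  field_simp
  ring

lemma Gamma_nat_add_le_mul_factorial {s : ℝ} (hs : 0 < s) (hs1 : s ≤ 1) (n : ℕ) :
    Gamma (n + s) ≤ Gamma s * n ! := by
  induction n with
  | zero => simp
  | succ n ih =>
    rw [Nat.cast_succ, add_right_comm, Gamma_add_one (by positivity), Nat.factorial_succ,
      Nat.cast_mul, Nat.cast_succ, mul_left_comm]
    exact mul_le_mul (by linarith) ih (Gamma_pos_of_pos (by positivity)).le (by positivity)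

lemma rpow_mul_exp_neg_mul_add_div_le {s c b t : ℝ} (hb : 0 ≤ b) (ht : 0 < t) :
    t ^ s * exp (-(c * t + b / t)) ≤ t ^ s * exp (-(c * t)) := by
  gcongr
  exact le_add_of_nonneg_right (div_nonneg hb ht.le)

lemma integrableOn_rpow_mul_exp_neg_mul_add_div {s c b : ℝ} (hs : -1 < s) (hc : 0 < c)
    (hb : 0 ≤ b) : IntegrableOn (fun t ↦ t ^ s * exp (-(c * t + b / t))) (Ioi 0) := by
  refine (integrableOn_rpow_mul_exp_neg_mul_rpow hs one_pos hc).mono'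
    (by fun_prop : Measurable _).aestronglyMeasurable ?_
  filter_upwards [ae_restrict_mem measurableSet_Ioi] with t (ht : 0 < t)
  rw [norm_of_nonneg (by positivity), rpow_one, neg_mul]
  exact rpow_mul_exp_neg_mul_add_div_le hb ht

lemma integral_rpow_mul_exp_neg_mul_add_div_le {s c b : ℝ} (hs : 0 < s) (hc : 0 < c)
    (hb : 0 ≤ b) : ∫ t in Ioi 0, t ^ (s - 1) * exp (-(c * t + b / t)) ≤ (1 / c) ^ s * Gamma s := by
  rw [← integral_rpow_mul_exp_neg_mul_Ioi hs hc]
  refine setIntegral_mono_on (integrableOn_rpow_mul_exp_neg_mul_add_div (by linarith) hc hb) ?_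
    measurableSet_Ioi fun t ht ↦ rpow_mul_exp_neg_mul_add_div_le hb ht
  simpa using integrableOn_rpow_mul_exp_neg_mul_add_div (s := s - 1) (by linarith) hc le_rfl

theorem hasSum_integral_rpow_mul_exp_neg_mul_add_div {s A C b : ℝ} (hs : 0 < s) (hs1 : s ≤ 1)
    (hAC : 2 * |A| < C) (hb : 0 ≤ b) :
    HasSum (fun n : ℕ ↦ (2 * A) ^ n / n ! *
        ∫ t in Ioi 0, t ^ (n + s - 1) * exp (-(C * t + b / t)))
      (∫ t in Ioi 0, t ^ (s - 1) * exp (-((C - 2 * A) * t + b / t))) := by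
  have hC : 0 < C := (mul_nonneg zero_le_two (abs_nonneg A)).trans_lt hAC
  set F : ℕ → ℝ → ℝ := fun n t ↦ (2 * A) ^ n / n ! * (t ^ (n + s - 1) * exp (-(C * t + b / t)))
  have hF_int (n : ℕ) : Integrable (F n) (volume.restrict (Ioi 0)) :=
    (integrableOn_rpow_mul_exp_neg_mul_add_div (by linarith [n.cast_nonneg (α := ℝ)]) hC
      hb).const_mul _
  have hF_norm (n : ℕ) :
      ∫ t in Ioi 0, ‖F n t‖ ≤ (1 / C) ^ s * Gamma s * (2 * |A| / C) ^ n := by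
    have hnorm : ∫ t in Ioi 0, ‖F n t‖ = (2 * |A|) ^ n / n ! *
        ∫ t in Ioi 0, t ^ (n + s - 1) * exp (-(C * t + b / t)) := by
      rw [← integral_const_mul]
      refine setIntegral_congr_fun measurableSet_Ioi fun t (ht : 0 < t) ↦ ?_
      rw [norm_mul, norm_of_nonneg (by positivity : 0 ≤ t ^ (n + s - 1) * exp _), norm_div,
        norm_pow, norm_mul, Real.norm_two, Real.norm_natCast, norm_eq_abs]
    calc ∫ t in Ioi 0, ‖F n t‖
        ≤ (2 * |A|) ^ n / n ! * ((1 / C) ^ (n + s) * Gamma (n + s)) := by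
          rw [hnorm]
          gcongr
          exact integral_rpow_mul_exp_neg_mul_add_div_le (by positivity) hC hb
      _ ≤ (2 * |A|) ^ n / n ! * ((1 / C) ^ (n + s) * (Gamma s * n !)) := by
          gcongr
          exact Gamma_nat_add_le_mul_factorial hs hs1 n
      _ = (1 / C) ^ s * Gamma s * (2 * |A| / C) ^ n := by
          rw [rpow_add (by positivity), rpow_natCast, div_pow, div_pow, one_pow]
          field_simp
  have hsummable : Summable fun n ↦ ∫ t in Ioi 0, ‖F n t‖ :=
    .of_nonneg_of_le (fun n ↦ integral_nonneg fun t ↦ norm_nonneg _) hF_norm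
      ((summable_geometric_of_lt_one (by positivity) ((div_lt_one hC).2 hAC)).mul_left _)
  have hF_sum : ∀ t ∈ Ioi (0 : ℝ),
      ∑' n, F n t = t ^ (s - 1) * exp (-((C - 2 * A) * t + b / t)) := by
    intro t (ht : 0 < t)
    have hexp := (NormedSpace.expSeries_div_hasSum_exp (2 * A * t)).mul_left
      (t ^ (s - 1) * exp (-(C * t + b / t)))
    rw [← Real.exp_eq_exp_ℝ, mul_assoc (t ^ (s - 1)), ← exp_add] at hexp
    convert hexp.tsum_eq using 1
    · congr 1 with n
      simp only [F]
      rw [add_sub_assoc, rpow_add ht, rpow_natCast]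
      ring
    · ring_nf
  have hsum := hasSum_integral_of_summable_integral_norm hF_int hsummable
  simp only [F, integral_const_mul] at hsum
  rwa [setIntegral_congr_fun measurableSet_Ioi hF_sum] at hsum

theorem exp_neg_mul_div_eq_tsum_besselK {r η A C : ℝ} (hr : 0 ≤ r) (hη : 0 < η)
    (hAC : 2 * |A| < C) (hr2 : r ^ 2 = C - 2 * A) :
    exp (-η * r) / r = ∑' n : ℕ, (1 / √π) * ((-1) ^ n * (-A) ^ n / n !) * √2 *
        C ^ ((-(n : ℝ) - 1 / 2) / 2) * η ^ ((n : ℝ) + 1 / 2) *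
        besselK ((n : ℝ) + 1 / 2) (η * √C) := by
  have hC : 0 < C := (mul_nonneg zero_le_two (abs_nonneg A)).trans_lt hAC
  have hb : 0 < (η / 2) ^ 2 := by positivity
  have hr : 0 < r := hr.lt_of_ne <| by
    rintro rfl
    linarith [le_abs_self A]
  have hyukawa : exp (-η * r) / r =
      1 / √π * ∫ t in Ioi 0, t ^ ((1 : ℝ) / 2 - 1) * exp (-(r ^ 2 * t + (η / 2) ^ 2 / t)) := by
    rw [integral_rpow_neg_half_mul_exp_neg_mul_add_div (by positivity) hb, ← mul_pow,
      sqrt_sq (by positivity), sqrt_div' _ (sq_nonneg r), sqrt_sq hr.le]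
    field_simp
  rw [hyukawa, hr2, ← (hasSum_integral_rpow_mul_exp_neg_mul_add_div one_half_pos
    (by norm_num) hAC hb.le).tsum_eq, ← tsum_mul_left]
  congr 1 with n
  rw [integral_rpow_mul_exp_neg_mul_add_div hC hb]
  have hK : 2 * √(C * (η / 2) ^ 2) = η * √C := by
    rw [sqrt_mul hC.le, sqrt_sq (by positivity)]
    ring
  have hpow : ((η / 2) ^ 2 / C) ^ (((n : ℝ) + 1 / 2) / 2) =
      η ^ ((n : ℝ) + 1 / 2) / (2 ^ n * √2) * C ^ ((-(n : ℝ) - 1 / 2) / 2) := by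
    rw [div_rpow (by positivity) hC.le, ← rpow_natCast, ← rpow_mul (by positivity),
      show ((2 : ℕ) : ℝ) * (((n : ℝ) + 1 / 2) / 2) = n + 1 / 2 by push_cast; ring,
      div_rpow hη.le zero_le_two, rpow_add two_pos, rpow_natCast, ← sqrt_eq_rpow, div_eq_mul_inv,
      ← rpow_neg hC.le]
    ring_nf
  have hsign : (-1) ^ n * (-A) ^ n = A ^ n := by
    rw [← mul_pow, neg_one_mul, neg_neg]
  rw [hK, hpow, hsign, mul_pow]
  field_simp
  rw [sq_sqrt zero_le_two]

theorem stmt9_general (v₁ v₂ : EuclideanSpace ℝ (Fin 3)) (η : ℝ)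
    (hη : 0 < η)
    (hconv : 2 * |(inner ℝ v₁ v₂ : ℝ)| < ‖v₁‖ ^ 2 + ‖v₂‖ ^ 2) :
    Real.exp (-η * ‖v₁ - v₂‖) / ‖v₁ - v₂‖ =
      ∑' n : ℕ, (1 / Real.sqrt π) *
        ((-1) ^ n * (-(inner ℝ v₁ v₂ : ℝ)) ^ n / n.factorial) * Real.sqrt 2 *
        (‖v₁‖ ^ 2 + ‖v₂‖ ^ 2) ^ ((-(n : ℝ) - 1 / 2) / 2) * η ^ ((n : ℝ) + 1 / 2) *
        besselK ((n : ℝ) + 1 / 2) (η * Real.sqrt (‖v₁‖ ^ 2 + ‖v₂‖ ^ 2)) :=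
  exp_neg_mul_div_eq_tsum_besselK (norm_nonneg _) hη hconv (by rw [norm_sub_sq_real]; ring)

theorem stmt9 (v₁ v₂ : EuclideanSpace ℝ (Fin 3)) (η : ℝ)
    (h₁ : 0 < ‖v₁‖) (h₂ : 0 < ‖v₂‖) (hη : 0 < η)
    (hconv : 2 * |(inner ℝ v₁ v₂ : ℝ)| < ‖v₁‖ ^ 2 + ‖v₂‖ ^ 2) :
    Real.exp (-η * ‖v₁ - v₂‖) / ‖v₁ - v₂‖ =
      ∑' n : ℕ, (1 / Real.sqrt π) *
        ((-1) ^ n * (-(inner ℝ v₁ v₂ : ℝ)) ^ n / n.factorial) * Real.sqrt 2 *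
        (‖v₁‖ ^ 2 + ‖v₂‖ ^ 2) ^ ((-(n : ℝ) - 1 / 2) / 2) * η ^ ((n : ℝ) + 1 / 2) *
        besselK ((n : ℝ) + 1 / 2) (η * Real.sqrt (‖v₁‖ ^ 2 + ‖v₂‖ ^ 2)) :=
  stmt9_general v₁ v₂ η hη hconv
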